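/- Wick's theorem for the Heisenberg algebra: for a product P = m₀·m₁⋯m_n·m_{n+1} of monomials in the operators a_s (where m₀ contains only a_s with s > 0 and m_{n+1} only a_s with s < 0), the vacuum expectation ⟨P⟩ equals the sum over all perfect matchings between the factors a_i (i > 0) and factors a_{−i} that appear strictly later in the product, of the product of the weights i over the matched pairs; if no such complete matching exists, ⟨P⟩ = 0. -/

import Mathlib

/-!
Write the word as `a_x · w`. If `x < 0`, then `⟨v_∅, a_x ⋯⟩ = ⟨a_{-x} v_∅, ⋯⟩ = 0`, and no matching
exists since nothing precedes the first factor. If `x > 0`, commuting `a_x` to the right through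
`w` with `[a_x, a_m] = x δ_{m,-x}` until it kills the vacuum gives
`⟨a_x w⟩ = ∑_{j : w_j = -x} x ⟨w with a_{w_j} deleted⟩`, and sorting the matchings by the partner
of the first factor gives the same recursion for their number. A deleted factor is replaced by
`a_0 = id` rather than removed, so the word keeps its length and the induction on the length
needs no reindexing.
-/

/-- Heisenberg operators on the bosonic Fock space `F = ℂ[p₁,p₂,…]`. -/
noncomputable def fockOp (n : ℤ) : MvPolynomial ℕ ℂ → MvPolynomial ℕ ℂ :=
  fun f =>
    if 0 < n then (n : ℂ) • MvPolynomial.pderiv n.toNat f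
    else if n < 0 then MvPolynomial.X (-n).toNat * f
    else f

/-- The vacuum expectation `⟨a_{s₁}⋯a_{s_N}⟩`. -/
noncomputable def vacuumExp (l : List ℤ) : ℂ :=
  MvPolynomial.constantCoeff (l.foldr fockOp (1 : MvPolynomial ℕ ℂ))

open MvPolynomial Function

theorem MvPolynomial.pderiv_pderiv_comm {R σ : Type*} [CommSemiring R] (i j : σ)
    (p : MvPolynomial σ R) : pderiv i (pderiv j p) = pderiv j (pderiv i p) := by
  classical
  induction p using MvPolynomial.induction_on with
  | C => simp
  | add p q hp hq => simp [hp, hq]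
  | mul_X q k hq =>
    simp only [pderiv_mul, map_add, pderiv_X, hq, Pi.single_apply]
    split_ifs <;> simp; ring

section FockSpace

noncomputable def fockOpLinear (n : ℤ) : MvPolynomial ℕ ℂ →ₗ[ℂ] MvPolynomial ℕ ℂ where
  toFun := fockOp n
  map_add' f g := by unfold fockOp; split_ifs <;> simp [mul_add, smul_add]
  map_smul' c f := by unfold fockOp; split_ifs <;> simp [smul_comm c]

@[simp] theorem coe_fockOpLinear (n : ℤ) : ⇑(fockOpLinear n) = fockOp n := rfl

@[simp] theorem fockOp_zero : fockOp 0 = id := by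
  ext1 f; simp [fockOp]

theorem fockOp_one_of_pos {n : ℤ} (hn : 0 < n) : fockOp n 1 = 0 := by
  simp [fockOp, hn]

theorem constantCoeff_fockOp_of_neg {n : ℤ} (hn : n < 0) (f : MvPolynomial ℕ ℂ) :
    constantCoeff (fockOp n f) = 0 := by
  simp [fockOp, hn, hn.not_gt]

theorem foldr_fockOp_zero (l : List ℤ) : l.foldr fockOp 0 = 0 := by
  induction l with
  | nil => rfl
  | cons m l ih => rw [List.foldr_cons, ih, ← coe_fockOpLinear, map_zero]

theorem fockOp_fockOp_of_pos {n : ℤ} (hn : 0 < n) (m : ℤ) (f : MvPolynomial ℕ ℂ) :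
    fockOp n (fockOp m f) = fockOp m (fockOp n f) + if m = -n then (n : ℂ) • f else 0 := by
  rcases lt_trichotomy m 0 with hm | rfl | hm
  · unfold fockOp
    rw [if_pos hn, if_pos hn, if_neg hm.not_gt, if_pos hm, if_neg hm.not_gt, if_pos hm,
      pderiv_mul, mul_smul_comm, smul_add, add_comm]
    congr 1
    split_ifs with hmn
    · rw [hmn, neg_neg, pderiv_X_self, one_mul]
    · rw [pderiv_X_of_ne (by omega), zero_mul, smul_zero]
  · simp [show (0 : ℤ) ≠ -n by omega]
  · simp only [fockOp, if_pos hn, if_pos hm, if_neg (show m ≠ -n by omega), add_zero]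
    rw [Derivation.map_smul, Derivation.map_smul, pderiv_pderiv_comm, smul_comm]

theorem fockOp_foldr_ofFn_of_pos {n : ℤ} (hn : 0 < n) {M : ℕ} (t : Fin M → ℤ)
    (f : MvPolynomial ℕ ℂ) :
    fockOp n ((List.ofFn t).foldr fockOp f) = (List.ofFn t).foldr fockOp (fockOp n f) +
      ∑ j, if t j = -n then (n : ℂ) • (List.ofFn (update t j 0)).foldr fockOp f else 0 := by
  induction t using Fin.consInduction with
  | elim0 => simp
  | cons m t ih =>
    simp only [List.ofFn_cons, List.foldr_cons, fockOp_fockOp_of_pos hn, ih, Fin.sum_univ_succ,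
      Fin.update_cons_zero, Fin.cons_zero, Fin.cons_succ, ← Fin.cons_update, fockOp_zero, id]
    rw [← coe_fockOpLinear m]
    simp only [map_add, map_sum, apply_ite (fockOpLinear m), map_smul, map_zero]
    simp only [coe_fockOpLinear]
    abel

@[simp] theorem vacuumExp_nil : vacuumExp [] = 1 := by simp [vacuumExp]

@[simp] theorem vacuumExp_zero_cons (l : List ℤ) : vacuumExp (0 :: l) = vacuumExp l := by
  simp [vacuumExp]

theorem vacuumExp_cons_of_neg {n : ℤ} (hn : n < 0) (l : List ℤ) : vacuumExp (n :: l) = 0 :=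
  constantCoeff_fockOp_of_neg hn _

theorem vacuumExp_cons_ofFn_of_pos {n : ℤ} (hn : 0 < n) {M : ℕ} (t : Fin M → ℤ) :
    vacuumExp (n :: List.ofFn t) =
      ∑ j, if t j = -n then (n : ℂ) * vacuumExp (List.ofFn (update t j 0)) else 0 := by
  simp only [vacuumExp, List.foldr_cons, fockOp_foldr_ofFn_of_pos hn, fockOp_one_of_pos hn,
    foldr_fockOp_zero]
  simp [map_sum, apply_ite constantCoeff, smul_eq_C_mul]

end FockSpace

namespace Equiv

def subtypeApplyEqEquiv {α β : Type*} [DecidableEq α] [DecidableEq β] (a : α) (b : β) :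
    {e : α ≃ β // e a = b} ≃ ({x // x ≠ a} ≃ {y // y ≠ b}) :=
  ((equivCongr (optionSubtypeNe a).symm (Equiv.refl β)).subtypeEquiv fun e => by simp).trans
    (optionSubtype b)

def subtypeNeEquiv {α : Type*} {a : α} {p q : α → Prop} (h : ∀ x, q x ↔ p x ∧ x ≠ a)
    (ha : p a) : {x : {x // p x} // x ≠ ⟨a, ha⟩} ≃ {x // q x} :=
  (subtypeEquivRight fun x => by simp [h, Subtype.ext_iff, x.2]).trans
    (subtypeSubtypeEquivSubtype fun hx => ((h _).1 hx).1)

end Equiv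

section UpdatePair

variable {α : Type*} [DecidableEq α] {s : α → ℤ} {a b : α}

theorem pos_update_update_iff (hb : s b < 0) (x : α) :
    0 < update (update s a 0) b 0 x ↔ 0 < s x ∧ x ≠ a := by
  rcases eq_or_ne x b with rfl | hxb
  · simp [hb.le]
  rcases eq_or_ne x a with rfl | hxa
  · simp [hxb]
  · simp [hxa, hxb]

theorem neg_update_update_iff (ha : 0 < s a) (x : α) :
    update (update s a 0) b 0 x < 0 ↔ s x < 0 ∧ x ≠ b := by
  rcases eq_or_ne x b with rfl | hxb
  · simp
  rcases eq_or_ne x a with rfl | hxa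
  · simp [hxb, ha.le]
  · simp [hxa, hxb]

theorem update_update_eq_of_ne_zero {x : α} (hx : update (update s a 0) b 0 x ≠ 0) :
    update (update s a 0) b 0 x = s x := by
  rcases eq_or_ne x b with rfl | hxb
  · simp at hx
  rcases eq_or_ne x a with rfl | hxa
  · simp [hxb] at hx
  · simp [hxa, hxb]

end UpdatePair

section Matchings

variable {α β : Type*} [LinearOrder α] [LinearOrder β]

def IsMatching (s : α → ℤ) (e : {i // 0 < s i} ≃ {i // s i < 0}) : Prop :=
  ∀ i : {i // 0 < s i}, (i : α) < e i ∧ s (e i) = -s i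

/-- Entries `0` stand for `a_0 = id` and take no part in a matching. -/
def Matching (s : α → ℤ) : Type _ := {e // IsMatching s e}

namespace Matching

variable {s : α → ℤ}

instance [Finite α] : Finite (Matching s) := by unfold Matching; infer_instance

theorem isEmpty_of_isBot {a : α} (ha : IsBot a) (hs : s a < 0) : IsEmpty (Matching s) :=
  ⟨fun E => by
    have h := (E.2 (E.1.symm ⟨a, hs⟩)).1
    rw [E.1.apply_symm_apply] at h
    exact h.not_ge (ha _)⟩

theorem card_of_isEmpty [IsEmpty α] : Nat.card (Matching s) = 1 :=
  Nat.card_eq_one_iff_unique.mpr ⟨inferInstanceAs (Subsingleton (Subtype _)),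
    ⟨⟨Equiv.equivOfIsEmpty _ _, fun i => isEmptyElim i⟩⟩⟩

noncomputable def subtypeCompEquiv (f : β ↪o α) {p : ℤ → Prop} (hp : ¬ p 0)
    (hf : ∀ a ∉ Set.range f, s a = 0) : {i // p (s (f i))} ≃ {a // p (s a)} :=
  Equiv.ofBijective (fun i => ⟨f i, i.2⟩)
    ⟨fun i j h => Subtype.ext (f.injective (congrArg Subtype.val h)), fun a => by
      by_cases ha : (a : α) ∈ Set.range f
      · obtain ⟨i, hi⟩ := ha
        exact ⟨⟨i, hi ▸ a.2⟩, Subtype.ext hi⟩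
      · exact absurd (hf a ha ▸ a.2) hp⟩

@[simp] theorem coe_subtypeCompEquiv_apply (f : β ↪o α) {p : ℤ → Prop} (hp : ¬ p 0)
    (hf : ∀ a ∉ Set.range f, s a = 0) (i : {i // p (s (f i))}) :
    (subtypeCompEquiv f hp hf i : α) = f i := rfl

noncomputable def equivOfComp (f : β ↪o α) (hf : ∀ a ∉ Set.range f, s a = 0) :
    Matching (s ∘ f) ≃ Matching s :=
  (Equiv.equivCongr (subtypeCompEquiv f (p := (0 < ·)) (lt_irrefl 0) hf)
    (subtypeCompEquiv f (p := (· < 0)) (lt_irrefl 0) hf)).subtypeEquiv fun e => by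
      unfold IsMatching
      rw [← (subtypeCompEquiv f (p := (0 < ·)) (lt_irrefl 0) hf).forall_congr_right]
      simp

variable {a b : α}

def restrictEquiv (ha : 0 < s a) (hb : s b < 0) :
    {e : {i // 0 < s i} ≃ {i // s i < 0} // e ⟨a, ha⟩ = ⟨b, hb⟩} ≃
      ({i // 0 < update (update s a 0) b 0 i} ≃ {i // update (update s a 0) b 0 i < 0}) :=
  (Equiv.subtypeApplyEqEquiv _ _).trans (Equiv.equivCongr
    (Equiv.subtypeNeEquiv (pos_update_update_iff hb) ha)
    (Equiv.subtypeNeEquiv (neg_update_update_iff ha) hb))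

@[simp] theorem coe_restrictEquiv_apply (ha : 0 < s a) (hb : s b < 0)
    (e : {e : {i // 0 < s i} ≃ {i // s i < 0} // e ⟨a, ha⟩ = ⟨b, hb⟩})
    (x : {i // 0 < update (update s a 0) b 0 i}) :
    (restrictEquiv ha hb e x : α) = e.1 ⟨x, ((pos_update_update_iff hb x).1 x.2).1⟩ :=
  rfl

def fiberEquiv (ha : 0 < s a) (hab : a < b) (hb : s b = -s a) :
    {E : Matching s // E.1 ⟨a, ha⟩ = ⟨b, by omega⟩} ≃ Matching (update (update s a 0) b 0) :=
  have hb' : s b < 0 := by omega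
  calc {E : {e // IsMatching s e} // E.1 ⟨a, ha⟩ = ⟨b, hb'⟩}
    _ ≃ {e // IsMatching s e ∧ e ⟨a, ha⟩ = ⟨b, hb'⟩} :=
      Equiv.subtypeSubtypeEquivSubtypeInter (IsMatching s) (· ⟨a, ha⟩ = ⟨b, hb'⟩)
    _ ≃ {e // e ⟨a, ha⟩ = ⟨b, hb'⟩ ∧ IsMatching s e} := Equiv.subtypeEquivRight fun _ => and_comm
    _ ≃ {e : {e // e ⟨a, ha⟩ = ⟨b, hb'⟩} // IsMatching s e.1} :=
      (Equiv.subtypeSubtypeEquivSubtypeInter (· ⟨a, ha⟩ = ⟨b, hb'⟩) (IsMatching s)).symm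
    _ ≃ {e // IsMatching (update (update s a 0) b 0) e} :=
      (restrictEquiv ha hb').subtypeEquiv fun e => by
        constructor
        · intro h x
          have hy := (restrictEquiv ha hb' e x).2
          rw [coe_restrictEquiv_apply] at hy ⊢
          obtain ⟨hlt, hs⟩ := h ⟨x, ((pos_update_update_iff hb' x).1 x.2).1⟩
          have hx := update_update_eq_of_ne_zero x.2.ne'
          have hy := update_update_eq_of_ne_zero hy.ne
          exact ⟨hlt, by linarith⟩
        · intro h p
          by_cases hp : p = ⟨a, ha⟩
          · rw [hp, e.2]
            exact ⟨hab, hb⟩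
          · have hx : 0 < update (update s a 0) b 0 p :=
              (pos_update_update_iff hb' p).2 ⟨p.2, fun h => hp (Subtype.ext h)⟩
            have hy := (restrictEquiv ha hb' e ⟨p, hx⟩).2
            obtain ⟨hlt, hs⟩ := h ⟨p, hx⟩
            rw [coe_restrictEquiv_apply] at hy hlt hs
            have hx := update_update_eq_of_ne_zero hx.ne'
            have hy := update_update_eq_of_ne_zero hy.ne
            exact ⟨hlt, by linarith⟩

theorem card_eq_sum [Fintype α] (ha : 0 < s a) :
    Nat.card (Matching s) = ∑ b, if a < b ∧ s b = -s a then
      Nat.card (Matching (update (update s a 0) b 0)) else 0 := by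
  rw [← Nat.card_congr (Equiv.sigmaFiberEquiv fun E : Matching s => (E.1 ⟨a, ha⟩ : α)),
    Nat.card_sigma]
  refine Finset.sum_congr rfl fun b _ => ?_
  split_ifs with hb
  · exact Nat.card_congr ((Equiv.subtypeEquivRight fun E => Subtype.ext_iff.symm).trans
      (fiberEquiv ha hb.1 hb.2))
  · have : IsEmpty {E : Matching s // (E.1 ⟨a, ha⟩ : α) = b} :=
      ⟨fun ⟨E, hE⟩ => hb (hE ▸ E.2 ⟨a, ha⟩)⟩
    exact Nat.card_of_isEmpty

variable {M : ℕ}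

theorem card_cons_zero (t : Fin M → ℤ) :
    Nat.card (Matching (Fin.cons 0 t : Fin (M + 1) → ℤ)) = Nat.card (Matching t) :=
  (Nat.card_congr (equivOfComp (Fin.succOrderEmb M) fun i hi => by
    obtain rfl : i = 0 := by
      by_contra h
      exact hi ⟨i.pred h, by simp⟩
    rfl)).symm

theorem card_cons_of_neg {x : ℤ} (hx : x < 0) (t : Fin M → ℤ) :
    Nat.card (Matching (Fin.cons x t : Fin (M + 1) → ℤ)) = 0 :=
  have := isEmpty_of_isBot (s := Fin.cons x t) (a := 0) (fun _ => Fin.zero_le _) hx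
  Nat.card_of_isEmpty

theorem card_cons_of_pos {x : ℤ} (hx : 0 < x) (t : Fin M → ℤ) :
    Nat.card (Matching (Fin.cons x t : Fin (M + 1) → ℤ)) =
      ∑ j, if t j = -x then Nat.card (Matching (update t j 0)) else 0 := by
  rw [card_eq_sum (a := 0) hx, Fin.sum_univ_succ]
  simp [Fin.update_cons_zero, ← Fin.cons_update, card_cons_zero, Fin.succ_pos]

end Matching

end Matchings

section Weight

variable {ι : Type*} [Fintype ι]

/-- The weight `∏ i` over the pairs `(a_i, a_{-i})` of any complete matching of `s`. -/
noncomputable def posWeight (s : ι → ℤ) : ℂ :=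
  ∏ i, if 0 < s i then (s i : ℂ) else 1

theorem posWeight_eq_prod_subtype (s : ι → ℤ) :
    posWeight s = ∏ i : {i // 0 < s i}, (s i : ℂ) := by
  rw [posWeight, ← Finset.prod_filter]
  exact Finset.prod_subtype _ (by simp) _

theorem posWeight_update_of_nonpos [DecidableEq ι] {t : ι → ℤ} {j : ι} (hj : t j ≤ 0) :
    posWeight (update t j 0) = posWeight t := by
  refine Finset.prod_congr rfl fun i _ => ?_
  rcases eq_or_ne i j with rfl | hi
  · simp [hj.not_gt]
  · simp [hi]

theorem posWeight_cons {M : ℕ} (x : ℤ) (t : Fin M → ℤ) :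
    posWeight (Fin.cons x t : Fin (M + 1) → ℤ) = (if 0 < x then (x : ℂ) else 1) * posWeight t := by
  simp [posWeight, Fin.prod_univ_succ]

end Weight

theorem vacuumExp_ofFn : ∀ {N : ℕ} (s : Fin N → ℤ),
    vacuumExp (List.ofFn s) = Nat.card (Matching s) * posWeight s
  | 0, s => by simp [Matching.card_of_isEmpty, posWeight]
  | N + 1, s => by
    induction s using Fin.consCases with
    | cons x t =>
    rw [List.ofFn_cons, posWeight_cons]
    rcases lt_trichotomy x 0 with hx | rfl | hx
    · simp [vacuumExp_cons_of_neg hx, Matching.card_cons_of_neg hx]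
    · simp [Matching.card_cons_zero, vacuumExp_ofFn t]
    · rw [vacuumExp_cons_ofFn_of_pos hx, Matching.card_cons_of_pos hx, if_pos hx, Nat.cast_sum,
        Finset.sum_mul]
      refine Finset.sum_congr rfl fun j _ => ?_
      split_ifs with hj
      · rw [vacuumExp_ofFn, posWeight_update_of_nonpos (by omega)]
        ring
      · simp

theorem wick_theorem_general (N : ℕ) (s : Fin N → ℤ) :
    vacuumExp (List.ofFn s) =
      ∑ᶠ (_ : {e : {i : Fin N // 0 < s i} ≃ {i : Fin N // s i < 0} //
          ∀ i : {i : Fin N // 0 < s i},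
            (i : Fin N) < ((e i : {i : Fin N // s i < 0}) : Fin N) ∧
              s ((e i : {i : Fin N // s i < 0}) : Fin N) = - s (i : Fin N)}),
        ∏ i : {i : Fin N // 0 < s i}, (s (i : Fin N) : ℂ) := by
  have : Fintype (Matching s) := Fintype.ofFinite _
  change _ = ∑ᶠ _ : Matching s, _
  rw [vacuumExp_ofFn, finsum_eq_sum_of_fintype, Finset.sum_const, Finset.card_univ,
    Fintype.card_eq_nat_card, nsmul_eq_mul, posWeight_eq_prod_subtype]

/-- Wick's theorem: for a product `P = a_{s₁}⋯a_{s_N}` of Heisenberg operators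
(`sᵢ ≠ 0`), the vacuum expectation `⟨P⟩` equals the sum, over all perfect matchings
pairing each factor `a_i` with `i > 0` to a factor `a_{−i}` occurring strictly later
in the product, of the product of the weights `i` of the matched pairs; in
particular `⟨P⟩ = 0` if no such complete matching exists. -/
theorem wick_theorem (N : ℕ) (s : Fin N → ℤ) (hs : ∀ i, s i ≠ 0) :
    vacuumExp (List.ofFn s) =
      ∑ᶠ (_ : {e : {i : Fin N // 0 < s i} ≃ {i : Fin N // s i < 0} //
          ∀ i : {i : Fin N // 0 < s i},
            (i : Fin N) < ((e i : {i : Fin N // s i < 0}) : Fin N) ∧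
              s ((e i : {i : Fin N // s i < 0}) : Fin N) = - s (i : Fin N)}),
        ∏ i : {i : Fin N // 0 < s i}, (s (i : Fin N) : ℂ) :=
  wick_theorem_general N s
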